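/- Let α ≥ 1, β > 1 and r > 1. There is a constant C(α,β,r) = (ln 2 + 2β^k ln(2α))/ln 2 with k the least integer such that 2^{k−2} ≥ r, such that for any standardized random variable X whose moments grow α-regularly and with speed β, one has N(rt) ≤ C(α,β,r)·N(t) for all t ≥ 2, where N(t) = −ln P(|X| > t). -/

import Mathlib

open MeasureTheory

/-- `‖X‖_p = (E|X|^p)^{1/p}`. -/
noncomputable def mnorm {Ω : Type*} [MeasurableSpace Ω] (μ : Measure Ω) (X : Ω → ℝ)
    (p : ℝ) : ℝ :=
  (∫ ω, |X ω| ^ p ∂μ) ^ (1 / p)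

/-!
Let `q` be the infimum of the levels `p ≥ 2` with `‖X‖_{βp} ≥ t`. Below `q` the speed assumption
gives `‖X‖_p ≤ ‖X‖_{βp} / 2 < t / 2`, so Markov's inequality at level `p` yields
`P(|X| > t) ≤ 2^{-p}`, hence `P(|X| > t) ≤ 2^{-q}`. Conversely, for `s ≥ 2` with `‖X‖_{βs} ≥ t`,
iterating the speed assumption gives `‖X‖_p ≥ 2^{k-1} t ≥ 2rt` at `p = β^k s`, and Paley–Zygmund at
level `p`, together with `‖X‖_{2p} ≤ 2α ‖X‖_p`, yields
`P(|X| > rt) ≥ (1/4) (2α)^{-2p} ≥ 2^{-sC}`. Letting `s ↓ q` gives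
`P(|X| > rt) ≥ 2^{-qC} ≥ P(|X| > t)^C`.
-/

section

variable {Ω : Type*} [MeasurableSpace Ω] {μ : Measure Ω}

theorem paley_zygmund [IsProbabilityMeasure μ] {f : Ω → ℝ} (hf0 : 0 ≤ f) (hf : MemLp f 2 μ)
    {θ : ℝ} (hθ0 : 0 ≤ θ) (hθ1 : θ ≤ 1) :
    (1 - θ) ^ 2 * (∫ ω, f ω ∂μ) ^ 2 ≤
      (∫ ω, f ω ^ 2 ∂μ) * μ.real {ω | θ * ∫ ω, f ω ∂μ < f ω} := by
  set E := ∫ ω, f ω ∂μ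
  set S := {ω | θ * E < f ω}
  set g := S.indicator (1 : Ω → ℝ)
  have hE : 0 ≤ E := integral_nonneg hf0
  have hS : NullMeasurableSet S μ := nullMeasurableSet_lt aemeasurable_const hf.aemeasurable
  have hg : MemLp g 2 μ :=
    (memLp_indicator_const 2 (measurableSet_toMeasurable μ S) 1 (.inr (measure_ne_top _ _))).ae_eq
      (indicator_ae_eq_of_ae_eq_set hS.toMeasurable_ae_eq)
  have hg0 : 0 ≤ g := Set.indicator_nonneg fun _ _ => zero_le_one
  have hfg : ∀ ω, f ω ≤ θ * E + f ω * g ω := by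
    intro ω
    by_cases hω : ω ∈ S
    · simp [g, hω, mul_nonneg hθ0 hE]
    · rw [show g ω = 0 from Set.indicator_of_notMem hω _, mul_zero, add_zero]
      exact not_lt.1 hω
  have hsplit : E ≤ θ * E + ∫ ω, f ω * g ω ∂μ := by
    have hfgi : Integrable (fun ω => f ω * g ω) μ := hf.integrable_mul hg
    calc E ≤ ∫ ω, (θ * E + f ω * g ω) ∂μ :=
          integral_mono (hf.integrable one_le_two) ((integrable_const _).add hfgi) hfg
      _ = θ * E + ∫ ω, f ω * g ω ∂μ := by
          rw [integral_add (integrable_const _) hfgi, integral_const, probReal_univ, one_smul]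
  have hcs : ∫ ω, f ω * g ω ∂μ ≤ √(∫ ω, f ω ^ 2 ∂μ) * √(μ.real S) := by
    have := integral_mul_le_Lp_mul_Lq_of_nonneg Real.HolderConjugate.two_two
      (ae_of_all _ hf0) (ae_of_all _ hg0) (by simpa using hf) (by simpa using hg)
    have hg2 : ∫ ω, g ω ^ 2 ∂μ = μ.real S := by
      have hsq : ∀ ω, g ω ^ 2 = g ω := fun ω => by by_cases hω : ω ∈ S <;> simp [g, hω]
      simp only [hsq, g, integral_indicator₀ hS, Pi.one_apply, setIntegral_const, smul_eq_mul,
        mul_one]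
    simpa only [Real.rpow_two, ← Real.sqrt_eq_rpow, hg2] using this
  have hlhs : 0 ≤ (1 - θ) * E := mul_nonneg (by linarith) hE
  calc (1 - θ) ^ 2 * E ^ 2 = ((1 - θ) * E) ^ 2 := by ring
    _ ≤ (√(∫ ω, f ω ^ 2 ∂μ) * √(μ.real S)) ^ 2 := pow_le_pow_left₀ hlhs (by linarith) 2
    _ = (∫ ω, f ω ^ 2 ∂μ) * μ.real S := by
      rw [mul_pow, Real.sq_sqrt (integral_nonneg fun ω => sq_nonneg _),
        Real.sq_sqrt measureReal_nonneg]

lemma mnorm_nonneg (μ : Measure Ω) (X : Ω → ℝ) (p : ℝ) : 0 ≤ mnorm μ X p :=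
  Real.rpow_nonneg (integral_nonneg fun _ => Real.rpow_nonneg (abs_nonneg _) _) _

variable {X : Ω → ℝ} {p : ℝ}

lemma mnorm_rpow_self (hp : p ≠ 0) : mnorm μ X p ^ p = ∫ ω, |X ω| ^ p ∂μ := by
  rw [mnorm, ← Real.rpow_mul (integral_nonneg fun _ => Real.rpow_nonneg (abs_nonneg _) _),
    one_div_mul_cancel hp, Real.rpow_one]

lemma MeasureTheory.MemLp.integrable_abs_rpow (hp : 0 < p) (hX : MemLp X (ENNReal.ofReal p) μ) :
    Integrable (fun ω => |X ω| ^ p) μ := by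
  simpa [ENNReal.toReal_ofReal hp.le] using
    hX.integrable_norm_rpow (by simpa using hp) ENNReal.ofReal_ne_top

lemma mnorm_two (hvar : ∫ ω, X ω ^ 2 ∂μ = 1) : mnorm μ X 2 = 1 := by
  simp [mnorm, sq_abs, hvar]

theorem measureReal_lt_abs_le_mnorm_div_rpow [IsFiniteMeasure μ] {c : ℝ} (hp : 0 < p)
    (hc : 0 < c) (hX : MemLp X (ENNReal.ofReal p) μ) :
    μ.real {ω | c < |X ω|} ≤ (mnorm μ X p / c) ^ p := by
  have hcp : 0 < c ^ p := Real.rpow_pos_of_pos hc p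
  have hsub : {ω | c < |X ω|} ⊆ {ω | c ^ p ≤ |X ω| ^ p} := fun ω hω =>
    Real.rpow_le_rpow hc.le (le_of_lt hω) hp.le
  rw [Real.div_rpow (mnorm_nonneg μ X p) hc.le, mnorm_rpow_self hp.ne', le_div_iff₀ hcp, mul_comm]
  calc c ^ p * μ.real {ω | c < |X ω|} ≤ c ^ p * μ.real {ω | c ^ p ≤ |X ω| ^ p} :=
        mul_le_mul_of_nonneg_left (measureReal_mono (μ := μ) hsub) hcp.le
    _ ≤ ∫ ω, |X ω| ^ p ∂μ := mul_meas_ge_le_integral_of_nonneg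
        (ae_of_all _ fun _ => Real.rpow_nonneg (abs_nonneg _) _) (hX.integrable_abs_rpow hp) _

theorem paley_zygmund_mnorm [IsProbabilityMeasure μ] (hp : 0 < p)
    (hX : MemLp X (ENNReal.ofReal (2 * p)) μ) :
    (1 - (2 : ℝ) ^ (-p)) ^ 2 * mnorm μ X p ^ (2 * p) ≤
      mnorm μ X (2 * p) ^ (2 * p) * μ.real {ω | mnorm μ X p / 2 < |X ω|} := by
  have hf : MemLp (fun ω => |X ω| ^ p) 2 μ := by
    have := hX.norm_rpow_div (ENNReal.ofReal p)
    rwa [← ENNReal.ofReal_div_of_pos hp, mul_div_cancel_right₀ _ hp.ne', ENNReal.ofReal_ofNat,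
      ENNReal.toReal_ofReal hp.le] at this
  have hsq : ∀ x : ℝ, 0 ≤ x → (x ^ p) ^ 2 = x ^ (2 * p) := fun x hx => by
    rw [← Real.rpow_mul_natCast hx, mul_comm]; norm_num
  have hset : {ω | (2 : ℝ) ^ (-p) * ∫ ω, |X ω| ^ p ∂μ < |X ω| ^ p} =
      {ω | mnorm μ X p / 2 < |X ω|} := by
    ext ω
    rw [Set.mem_ofPred_eq, Set.mem_ofPred_eq, ← mnorm_rpow_self hp.ne', Real.rpow_neg zero_le_two,
      ← Real.inv_rpow zero_le_two, ← Real.mul_rpow (by norm_num) (mnorm_nonneg μ X p),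
      Real.rpow_lt_rpow_iff (mul_nonneg (by norm_num) (mnorm_nonneg μ X p)) (abs_nonneg _) hp,
      inv_mul_eq_div]
  have := paley_zygmund (fun ω => Real.rpow_nonneg (abs_nonneg (X ω)) p) hf
    (Real.rpow_nonneg zero_le_two _)
    (Real.rpow_le_one_of_one_le_of_nonpos one_le_two (neg_nonpos.2 hp.le))
  rwa [hset, ← mnorm_rpow_self hp.ne', hsq _ (mnorm_nonneg μ X p),
    integral_congr_ae (ae_of_all _ fun ω => hsq _ (abs_nonneg (X ω))),
    ← mnorm_rpow_self (by positivity)] at this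

theorem one_div_four_le_rpow_mul_measureReal_of_mnorm_le [IsProbabilityMeasure μ] {c : ℝ}
    (hp : 1 ≤ p) (hX : MemLp X (ENNReal.ofReal (2 * p)) μ) (hpos : 0 < mnorm μ X p)
    (hreg : mnorm μ X (2 * p) ≤ c * mnorm μ X p) :
    1 / 4 ≤ c ^ (2 * p) * μ.real {ω | mnorm μ X p / 2 < |X ω|} := by
  have hc : 0 ≤ c := nonneg_of_mul_nonneg_left ((mnorm_nonneg μ X _).trans hreg) hpos
  have hθ : 1 / 4 ≤ (1 - (2 : ℝ) ^ (-p)) ^ 2 := by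
    have : (2 : ℝ) ^ (-p) ≤ 2 ^ (-1 : ℝ) :=
      Real.rpow_le_rpow_of_exponent_le one_le_two (neg_le_neg hp)
    rw [Real.rpow_neg_one] at this
    nlinarith
  have hM : mnorm μ X (2 * p) ^ (2 * p) ≤ c ^ (2 * p) * mnorm μ X p ^ (2 * p) := by
    rw [← Real.mul_rpow hc hpos.le]
    exact Real.rpow_le_rpow (mnorm_nonneg μ X _) hreg (by linarith)
  have hm : 0 < mnorm μ X p ^ (2 * p) := Real.rpow_pos_of_pos hpos _
  refine le_of_mul_le_mul_right ?_ hm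
  calc 1 / 4 * mnorm μ X p ^ (2 * p) ≤ (1 - (2 : ℝ) ^ (-p)) ^ 2 * mnorm μ X p ^ (2 * p) := by
        gcongr
    _ ≤ mnorm μ X (2 * p) ^ (2 * p) * μ.real {ω | mnorm μ X p / 2 < |X ω|} :=
        paley_zygmund_mnorm (by linarith) hX
    _ ≤ c ^ (2 * p) * mnorm μ X p ^ (2 * p) * μ.real {ω | mnorm μ X p / 2 < |X ω|} := by
        gcongr
    _ = _ := by ring

theorem two_pow_mul_mnorm_le {β : ℝ} (hβ : 1 ≤ β)
    (hspeed : ∀ p : ℝ, 2 ≤ p → 2 * mnorm μ X p ≤ mnorm μ X (β * p)) (j : ℕ) {u : ℝ}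
    (hu : 2 ≤ u) : 2 ^ j * mnorm μ X u ≤ mnorm μ X (β ^ j * u) := by
  induction j generalizing u with
  | zero => simp
  | succ j ih =>
    calc (2 : ℝ) ^ (j + 1) * mnorm μ X u = 2 ^ j * (2 * mnorm μ X u) := by ring
      _ ≤ 2 ^ j * mnorm μ X (β * u) := by gcongr; exact hspeed u hu
      _ ≤ mnorm μ X (β ^ j * (β * u)) := ih (hu.trans (le_mul_of_one_le_left (by linarith) hβ))
      _ = mnorm μ X (β ^ (j + 1) * u) := by rw [pow_succ, mul_assoc]

lemma two_mul_le_two_pow_pred_of_le_two_rpow {r : ℝ} {k : ℕ} (hr : 1 < r)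
    (hk : r ≤ 2 ^ ((k : ℝ) - 2)) : 1 ≤ k ∧ 2 * r ≤ 2 ^ (k - 1) := by
  have hk1 : 1 ≤ k := by
    by_contra! h
    obtain rfl : k = 0 := by omega
    norm_num at hk
    linarith
  refine ⟨hk1, ?_⟩
  rw [← Real.rpow_natCast, Nat.cast_sub hk1, Nat.cast_one,
    show (k : ℝ) - 1 = (k : ℝ) - 2 + 1 by ring, Real.rpow_add_one two_ne_zero]
  linarith

noncomputable def tailExponent (α β : ℝ) (k : ℕ) : ℝ :=
  (Real.log 2 + 2 * β ^ k * Real.log (2 * α)) / Real.log 2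

lemma tailExponent_nonneg {α β : ℝ} (hα : 1 ≤ α) (hβ : 0 ≤ β) (k : ℕ) :
    0 ≤ tailExponent α β k := by
  have := Real.log_nonneg (by linarith : (1 : ℝ) ≤ 2 * α)
  unfold tailExponent
  positivity

lemma two_rpow_neg_mul_tailExponent {α : ℝ} (hα : 0 < α) (β s : ℝ) (k : ℕ) :
    (2 : ℝ) ^ (-s * tailExponent α β k) = 2 ^ (-s) * ((2 * α) ^ (2 * (β ^ k * s)))⁻¹ := by
  have hlog2 : Real.log 2 ≠ 0 := (Real.log_pos one_lt_two).ne'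
  rw [Real.rpow_def_of_pos two_pos, Real.rpow_def_of_pos two_pos,
    Real.rpow_def_of_pos (by linarith), ← Real.exp_neg, ← Real.exp_add, tailExponent]
  congr 1
  field_simp
  ring

def momentLevels (μ : Measure Ω) (X : Ω → ℝ) (β t : ℝ) : Set ℝ :=
  {p | 2 ≤ p ∧ t ≤ mnorm μ X (β * p)}

noncomputable def momentThreshold (μ : Measure Ω) (X : Ω → ℝ) (β t : ℝ) : ℝ :=
  sInf (momentLevels μ X β t)

variable {β : ℝ}

lemma momentLevels_nonempty (hβ : 1 ≤ β) (hvar : ∫ ω, X ω ^ 2 ∂μ = 1)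
    (hspeed : ∀ p : ℝ, 2 ≤ p → 2 * mnorm μ X p ≤ mnorm μ X (β * p)) (t : ℝ) :
    (momentLevels μ X β t).Nonempty := by
  obtain ⟨m, hm⟩ := pow_unbounded_of_one_lt t one_lt_two
  refine ⟨β ^ m * 2, le_mul_of_one_le_left zero_le_two (one_le_pow₀ hβ), ?_⟩
  have := two_pow_mul_mnorm_le hβ hspeed (m + 1) le_rfl
  rw [mnorm_two hvar, mul_one, pow_succ, pow_succ', mul_assoc] at this
  linarith [pow_pos (two_pos (α := ℝ)) m]

variable {t : ℝ} [IsProbabilityMeasure μ]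

theorem measureReal_lt_abs_le_two_rpow_neg_momentThreshold (hvar : ∫ ω, X ω ^ 2 ∂μ = 1)
    (hmem : ∀ p : ℝ, 2 ≤ p → MemLp X (ENNReal.ofReal p) μ)
    (hspeed : ∀ p : ℝ, 2 ≤ p → 2 * mnorm μ X p ≤ mnorm μ X (β * p)) (ht : 2 ≤ t) :
    μ.real {ω | t < |X ω|} ≤ 2 ^ (-momentThreshold μ X β t) := by
  have key : ∀ p < momentThreshold μ X β t, μ.real {ω | t < |X ω|} ≤ 2 ^ (-p) := by
    intro p hp
    -- Markov at level `max p 2`: below the threshold by speed, and at level 2 since `‖X‖₂ = 1`.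
    have hhalf : mnorm μ X (max p 2) ≤ t / 2 := by
      rcases le_total p 2 with h | h
      · rw [max_eq_right h, mnorm_two hvar]
        linarith
      · rw [max_eq_left h]
        have hnot := notMem_of_lt_csInf hp ⟨2, fun _ hq => hq.1⟩
        simp only [momentLevels, Set.mem_ofPred_eq, not_and, not_le] at hnot
        linarith [hspeed p h, hnot h]
    have hp₀ : (0 : ℝ) < max p 2 := by positivity
    calc μ.real {ω | t < |X ω|} ≤ (mnorm μ X (max p 2) / t) ^ max p 2 :=
          measureReal_lt_abs_le_mnorm_div_rpow hp₀ (by linarith) (hmem _ (le_max_right _ _))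
      _ ≤ (2⁻¹) ^ max p 2 := by
          gcongr
          · exact div_nonneg (mnorm_nonneg μ X _) (by linarith)
          · rw [div_le_iff₀ (by linarith)]
            linarith
      _ = 2 ^ (-max p 2) := by rw [Real.inv_rpow zero_le_two, Real.rpow_neg zero_le_two]
      _ ≤ 2 ^ (-p) := Real.rpow_le_rpow_of_exponent_le one_le_two (by simp)
  have hcont : Filter.Tendsto (fun p : ℝ => (2 : ℝ) ^ (-p))
      (nhdsWithin (momentThreshold μ X β t) (Set.Iio (momentThreshold μ X β t)))
      (nhds (2 ^ (-momentThreshold μ X β t))) :=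
    ((Real.continuous_const_rpow two_ne_zero).comp continuous_neg).continuousAt.tendsto.mono_left
      nhdsWithin_le_nhds
  exact ge_of_tendsto hcont (eventually_nhdsWithin_of_forall key)

theorem two_rpow_neg_mul_le_measureReal_of_mem {α r : ℝ} {k : ℕ} (hα : 1 ≤ α) (hβ : 1 ≤ β)
    (hk : 1 ≤ k) (hrk : 2 * r ≤ 2 ^ (k - 1)) (ht : 0 < t)
    (hmem : ∀ p : ℝ, 2 ≤ p → MemLp X (ENNReal.ofReal p) μ)
    (hreg : ∀ p q : ℝ, 2 ≤ q → q ≤ p → mnorm μ X p ≤ α * (p / q) * mnorm μ X q)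
    (hspeed : ∀ p : ℝ, 2 ≤ p → 2 * mnorm μ X p ≤ mnorm μ X (β * p)) {s : ℝ}
    (hs : s ∈ momentLevels μ X β t) :
    (2 : ℝ) ^ (-s * tailExponent α β k) ≤ μ.real {ω | r * t < |X ω|} := by
  obtain ⟨hs2, hst⟩ := hs
  set p := β ^ k * s
  have hp2 : 2 ≤ p := hs2.trans (le_mul_of_one_le_left (by linarith) (one_le_pow₀ hβ))
  have hnorm : 2 ^ (k - 1) * t ≤ mnorm μ X p := by
    have := two_pow_mul_mnorm_le hβ hspeed (k - 1)
      (hs2.trans (le_mul_of_one_le_left (by linarith) hβ))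
    rw [← mul_assoc, ← pow_succ, Nat.sub_add_cancel hk] at this
    exact (mul_le_mul_of_nonneg_left hst (by positivity)).trans this
  have hrt : r * t ≤ mnorm μ X p / 2 := by
    linarith [mul_le_mul_of_nonneg_right hrk ht.le]
  have hsub : {ω | mnorm μ X p / 2 < |X ω|} ⊆ {ω | r * t < |X ω|} := fun ω hω =>
    hrt.trans_lt hω
  have hreg2 : mnorm μ X (2 * p) ≤ 2 * α * mnorm μ X p := by
    have := hreg (2 * p) p hp2 (by linarith)
    rwa [mul_div_cancel_right₀ 2 (by positivity), mul_comm α] at this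
  have hpz := one_div_four_le_rpow_mul_measureReal_of_mnorm_le (by linarith)
    (hmem (2 * p) (by linarith)) ((by positivity : (0 : ℝ) < 2 ^ (k - 1) * t).trans_le hnorm)
    hreg2
  have hs4 : (2 : ℝ) ^ (-s) ≤ 1 / 4 := by
    calc (2 : ℝ) ^ (-s) ≤ 2 ^ (-2 : ℝ) := Real.rpow_le_rpow_of_exponent_le one_le_two (by linarith)
      _ = 1 / 4 := by norm_num
  have hc : 0 < (2 * α) ^ (2 * p) := Real.rpow_pos_of_pos (by linarith) _
  rw [two_rpow_neg_mul_tailExponent (by linarith), ← div_eq_mul_inv, div_le_iff₀ hc]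
  calc (2 : ℝ) ^ (-s) ≤ 1 / 4 := hs4
    _ ≤ (2 * α) ^ (2 * p) * μ.real {ω | mnorm μ X p / 2 < |X ω|} := hpz
    _ ≤ (2 * α) ^ (2 * p) * μ.real {ω | r * t < |X ω|} :=
        mul_le_mul_of_nonneg_left (measureReal_mono (μ := μ) hsub) hc.le
    _ = μ.real {ω | r * t < |X ω|} * (2 * α) ^ (2 * p) := mul_comm _ _

theorem two_rpow_neg_momentThreshold_mul_le_measureReal {α r : ℝ} {k : ℕ} (hα : 1 ≤ α)
    (hβ : 1 ≤ β) (hk : 1 ≤ k) (hrk : 2 * r ≤ 2 ^ (k - 1)) (ht : 0 < t)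
    (hvar : ∫ ω, X ω ^ 2 ∂μ = 1) (hmem : ∀ p : ℝ, 2 ≤ p → MemLp X (ENNReal.ofReal p) μ)
    (hreg : ∀ p q : ℝ, 2 ≤ q → q ≤ p → mnorm μ X p ≤ α * (p / q) * mnorm μ X q)
    (hspeed : ∀ p : ℝ, 2 ≤ p → 2 * mnorm μ X p ≤ mnorm μ X (β * p)) :
    (2 : ℝ) ^ (-momentThreshold μ X β t * tailExponent α β k) ≤ μ.real {ω | r * t < |X ω|} := by
  have hC := tailExponent_nonneg hα (by linarith) k (β := β)
  have key : ∀ s > momentThreshold μ X β t,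
      (2 : ℝ) ^ (-s * tailExponent α β k) ≤ μ.real {ω | r * t < |X ω|} := by
    intro s hs
    obtain ⟨s', hs', hs's⟩ :=
      exists_lt_of_csInf_lt (momentLevels_nonempty hβ hvar hspeed t) hs
    exact (Real.rpow_le_rpow_of_exponent_le one_le_two
      (mul_le_mul_of_nonneg_right (neg_le_neg hs's.le) hC)).trans
      (two_rpow_neg_mul_le_measureReal_of_mem hα hβ hk hrk ht hmem hreg hspeed hs')
  have hcont : Filter.Tendsto (fun s : ℝ => (2 : ℝ) ^ (-s * tailExponent α β k))
      (nhdsWithin (momentThreshold μ X β t) (Set.Ioi (momentThreshold μ X β t)))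
      (nhds (2 ^ (-momentThreshold μ X β t * tailExponent α β k))) :=
    ((Real.continuous_const_rpow two_ne_zero).comp
      (continuous_neg.mul continuous_const)).continuousAt.tendsto.mono_left nhdsWithin_le_nhds
  exact le_of_tendsto hcont (eventually_nhdsWithin_of_forall key)

end

theorem stmt10_general {Ω : Type*} [MeasurableSpace Ω] (μ : Measure Ω) [IsProbabilityMeasure μ]
    (X : Ω → ℝ) (α β r : ℝ) (hα : 1 ≤ α) (hβ : 1 < β) (hr : 1 < r)
    (hvar : ∫ ω, (X ω) ^ 2 ∂μ = 1)
    (hmem : ∀ p : ℝ, 2 ≤ p → MemLp X (ENNReal.ofReal p) μ)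
    (hreg : ∀ p q : ℝ, 2 ≤ q → q ≤ p → mnorm μ X p ≤ α * (p / q) * mnorm μ X q)
    (hspeed : ∀ p : ℝ, 2 ≤ p → 2 * mnorm μ X p ≤ mnorm μ X (β * p))
    (k : ℕ) (hk : IsLeast {m : ℕ | r ≤ 2 ^ ((m : ℝ) - 2)} k)
    (t : ℝ) (ht : 2 ≤ t) :
    (μ {ω | t < |X ω|}).toReal
        ^ ((Real.log 2 + 2 * β ^ k * Real.log (2 * α)) / Real.log 2)
      ≤ (μ {ω | r * t < |X ω|}).toReal := by
  obtain ⟨hk1, hrk⟩ := two_mul_le_two_pow_pred_of_le_two_rpow hr hk.1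
  calc μ.real {ω | t < |X ω|} ^ tailExponent α β k
      ≤ ((2 : ℝ) ^ (-momentThreshold μ X β t)) ^ tailExponent α β k :=
        Real.rpow_le_rpow measureReal_nonneg
          (measureReal_lt_abs_le_two_rpow_neg_momentThreshold hvar hmem hspeed ht)
          (tailExponent_nonneg hα (by linarith) k)
    _ = 2 ^ (-momentThreshold μ X β t * tailExponent α β k) := by rw [← Real.rpow_mul zero_le_two]
    _ ≤ μ.real {ω | r * t < |X ω|} :=
        two_rpow_neg_momentThreshold_mul_le_measureReal hα hβ.le hk1 hrk (by linarith) hvar hmem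
          hreg hspeed

/-- For α ≥ 1, β > 1, r > 1, with `k` the least integer such that `2^{k-2} ≥ r` and
`C = (ln 2 + 2 β^k ln(2α)) / ln 2`: for any standardized `X` whose moments grow
α-regularly with speed β, `N(rt) ≤ C N(t)` for `t ≥ 2`, where `N(t) = -ln P(|X| > t)`;
equivalently `P(|X| > rt) ≥ P(|X| > t)^C`. -/
theorem stmt10 {Ω : Type*} [MeasurableSpace Ω] (μ : Measure Ω) [IsProbabilityMeasure μ]
    (X : Ω → ℝ) (α β r : ℝ) (hα : 1 ≤ α) (hβ : 1 < β) (hr : 1 < r)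
    (hmean : ∫ ω, X ω ∂μ = 0) (hvar : ∫ ω, (X ω) ^ 2 ∂μ = 1)
    (hmem : ∀ p : ℝ, 2 ≤ p → MemLp X (ENNReal.ofReal p) μ)
    (hreg : ∀ p q : ℝ, 2 ≤ q → q ≤ p → mnorm μ X p ≤ α * (p / q) * mnorm μ X q)
    (hspeed : ∀ p : ℝ, 2 ≤ p → 2 * mnorm μ X p ≤ mnorm μ X (β * p))
    (k : ℕ) (hk : IsLeast {m : ℕ | r ≤ 2 ^ ((m : ℝ) - 2)} k)
    (t : ℝ) (ht : 2 ≤ t) :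
    (μ {ω | t < |X ω|}).toReal
        ^ ((Real.log 2 + 2 * β ^ k * Real.log (2 * α)) / Real.log 2)
      ≤ (μ {ω | r * t < |X ω|}).toReal :=
  stmt10_general μ X α β r hα hβ hr hvar hmem hreg hspeed k hk t ht
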